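/- arXiv:math/0511092 — 2 statements merged into one kernel-verified Lean document; each statement's English description precedes it below -/
import Mathlib

section
/- Suppose F : ℝ → ℝ satisfies 0 ≤ F(u) ≤ min(1, δ^{-2}(|u|−L)^{-2}) for |u| > L and F(u) ≤ 1 for all u, where δ ≥ 1 and 0 < L ≤ 2√t. Then ∫_{t+4√t}^∞ F(u−t) log(u+2) du ≪ (log t)/√t for large t. -/
set_option maxHeartbeats 2000000

open Real MeasureTheory Filter Set Topology

lemma aux_sqrt_atTop : Tendsto Real.sqrt atTop atTop := by
  refine tendsto_atTop_atTop.2 fun M => ⟨M^2, fun x hx => ?_⟩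
  calc M ≤ |M| := le_abs_self M
    _ = Real.sqrt (M^2) := (Real.sqrt_sq_eq_abs M).symm
    _ ≤ Real.sqrt x := Real.sqrt_le_sqrt hx

lemma aux_g1 (s a : ℝ) (h : s < a) :
    IntegrableOn (fun u => ((u - s)^2)⁻¹) (Set.Ioi a) ∧
      ∫ u in Set.Ioi a, ((u - s)^2)⁻¹ = (a - s)⁻¹ := by
  have hderiv : ∀ x ∈ Set.Ici a, HasDerivAt (fun u => -(u - s)⁻¹) (((x - s)^2)⁻¹) x := by
    intro x hx
    have hx0 : x - s ≠ 0 := by simp only [Set.mem_Ici] at hx; intro hc; nlinarith [hc]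
    have h1 : HasDerivAt (fun u : ℝ => u - s) 1 x := (hasDerivAt_id x).sub_const s
    have h2 := (h1.inv hx0).neg
    refine h2.congr_deriv ?_
    field_simp
  have hpos : ∀ x ∈ Set.Ioi a, 0 ≤ ((x - s)^2)⁻¹ := fun x _ => by positivity
  have htend : Tendsto (fun u : ℝ => -(u - s)⁻¹) atTop (𝓝 0) := by
    have : Tendsto (fun u : ℝ => (u - s)) atTop atTop :=
      tendsto_atTop_add_const_right _ (-s) tendsto_id
    simpa using this.inv_tendsto_atTop.neg
  refine ⟨integrableOn_Ioi_deriv_of_nonneg' hderiv hpos htend, ?_⟩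
  rw [integral_Ioi_of_hasDerivAt_of_nonneg' hderiv hpos htend]
  ring

lemma aux_g2 (c : ℝ) (hc : 0 < c) :
    IntegrableOn (fun u => 12 * (u * Real.sqrt u)⁻¹) (Set.Ioi c) ∧
      ∫ u in Set.Ioi c, 12 * (u * Real.sqrt u)⁻¹ = 24 * (Real.sqrt c)⁻¹ := by
  have hderiv : ∀ x ∈ Set.Ici c, HasDerivAt (fun u => -24 * (Real.sqrt u)⁻¹)
      (12 * (x * Real.sqrt x)⁻¹) x := by
    intro x hx
    have hx0 : 0 < x := lt_of_lt_of_le hc hx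
    have hs0 : Real.sqrt x ≠ 0 := by positivity
    have h1 := ((Real.hasDerivAt_sqrt hx0.ne').inv hs0).const_mul (-24 : ℝ)
    refine h1.congr_deriv ?_
    have hss : Real.sqrt x * Real.sqrt x = x := Real.mul_self_sqrt hx0.le
    field_simp
    nlinarith [hss, Real.sqrt_nonneg x]
  have hpos : ∀ x ∈ Set.Ioi c, 0 ≤ 12 * (x * Real.sqrt x)⁻¹ := by
    intro x hx
    have : 0 < x := lt_trans hc hx
    positivity
  have htend : Tendsto (fun u : ℝ => -24 * (Real.sqrt u)⁻¹) atTop (𝓝 0) := by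
    have := aux_sqrt_atTop.inv_tendsto_atTop.const_mul (-24 : ℝ)
    simpa using this
  refine ⟨integrableOn_Ioi_deriv_of_nonneg' hderiv hpos htend, ?_⟩
  rw [integral_Ioi_of_hasDerivAt_of_nonneg' hderiv hpos htend]
  ring

theorem stmt_4 :
    ∃ C T₀ : ℝ, ∀ t : ℝ, T₀ ≤ t → ∀ δ L : ℝ, 1 ≤ δ → 0 < L → L ≤ 2 * Real.sqrt t →
      ∀ F : ℝ → ℝ, Measurable F → (∀ u, 0 ≤ F u ∧ F u ≤ 1) →
      (∀ u : ℝ, L < |u| → F u ≤ δ⁻¹ ^ 2 * (|u| - L)⁻¹ ^ 2) →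
      ∫ u in Set.Ici (t + 4 * Real.sqrt t), F (u - t) * Real.log (u + 2)
        ≤ C * Real.log t / Real.sqrt t := by
  refine ⟨3, 1000000, ?_⟩
  intro t ht δ L hδ hL0 hL2 F hFm hF01 hFb
  have ht0 : (0:ℝ) < t := by linarith
  have hr0 : 0 < Real.sqrt t := Real.sqrt_pos.2 ht0
  set r := Real.sqrt t with hrdef
  have hrr : r * r = t := Real.mul_self_sqrt ht0.le
  have hr1000 : (1000:ℝ) ≤ r := by
    have h1 : Real.sqrt ((1000:ℝ)^2) ≤ Real.sqrt t := Real.sqrt_le_sqrt (by nlinarith)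
    rwa [Real.sqrt_sq (by norm_num : (0:ℝ) ≤ 1000)] at h1
  have hrt : r ≤ t := by nlinarith
  have ht2 : (8:ℝ) ≤ t^2 := by nlinarith
  have hlog1 : 1 ≤ Real.log t := by
    rw [Real.le_log_iff_exp_le ht0]
    have := Real.exp_one_lt_d9
    nlinarith
  have hrinv : 0 < r⁻¹ := inv_pos.2 hr0
  have hone : r * r⁻¹ = 1 := mul_inv_cancel₀ hr0.ne'
  have htinv : t⁻¹ = r⁻¹ * r⁻¹ := by rw [← hrr, mul_inv]
  have h2rinv : (2*r)⁻¹ = r⁻¹ / 2 := by rw [mul_inv]; ring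
  have hkey : 1000 * r⁻¹ ≤ 1 := by
    have h := mul_le_mul_of_nonneg_right hr1000 hrinv.le
    rwa [hone] at h
  have hfinal : 3 * Real.log t * (2*r)⁻¹ + 24 * t⁻¹ ≤ 3 * Real.log t / r := by
    rw [div_eq_mul_inv, h2rinv, htinv]
    nlinarith [mul_nonneg (sub_nonneg.2 hlog1) hrinv.le,
      mul_nonneg (sub_nonneg.2 hkey) hrinv.le, hrinv.le, hlog1]
  set s := t + 2*r with hsdef
  set a := t + 4*r with hadef
  set b := t^2 with hbdef
  have hsa : s < a := by simp only [hsdef, hadef]; linarith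
  have hab : a < b := by simp only [hadef, hbdef]; nlinarith
  have h2sb : 2*s ≤ b := by simp only [hsdef, hbdef]; nlinarith
  have ha0 : 0 < a := by simp only [hadef]; positivity
  have hb0 : 0 < b := by positivity
  obtain ⟨hg1i, hg1v⟩ := aux_g1 s a hsa
  obtain ⟨hg2ia, _⟩ := aux_g2 a ha0
  obtain ⟨hg2i, hg2v⟩ := aux_g2 b hb0
  have hsqb : Real.sqrt b = t := by rw [hbdef, Real.sqrt_sq ht0.le]
  set f := fun u => F (u - t) * Real.log (u + 2) with hfdef
  have hfm : Measurable f :=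
    (hFm.comp (measurable_id.sub_const t)).mul
      (Real.measurable_log.comp (measurable_id.add_const 2))
  have hfnn : ∀ u : ℝ, a ≤ u → 0 ≤ f u := by
    intro u hu
    exact mul_nonneg (hF01 _).1 (Real.log_nonneg (by nlinarith))
  have hFkey : ∀ u : ℝ, a < u → F (u - t) ≤ ((u - s)^2)⁻¹ := by
    intro u hu
    have hut : (0:ℝ) < u - t := by simp only [hadef] at hu; nlinarith
    have habs : |u - t| = u - t := abs_of_pos hut
    have h1 : L < |u - t| := by rw [habs]; simp only [hadef] at hu; nlinarith
    have h2 := hFb (u - t) h1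
    have hus : 0 < u - s := by simp only [hsdef]; simp only [hadef] at hu; nlinarith
    have h3 : (|u - t| - L)⁻¹ ≤ (u - s)⁻¹ := by
      rw [habs]
      apply inv_anti₀ hus
      simp only [hsdef]; nlinarith
    have h4 : δ⁻¹ ^ 2 ≤ 1 := by
      rw [inv_pow]
      exact inv_le_one_of_one_le₀ (one_le_pow₀ hδ)
    calc F (u - t) ≤ δ⁻¹ ^ 2 * (|u - t| - L)⁻¹ ^ 2 := h2
      _ ≤ 1 * ((u - s)⁻¹) ^ 2 := by
          apply mul_le_mul h4 _ (sq_nonneg _) (by norm_num)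
          exact pow_le_pow_left₀ (inv_nonneg.2 (by linarith)) h3 2
      _ = ((u - s)^2)⁻¹ := by rw [one_mul, inv_pow]
  have hbd1 : ∀ u ∈ Set.Ioo a b, f u ≤ 3 * Real.log t * ((u - s)^2)⁻¹ := by
    intro u hu
    have hau := hu.1
    have hub := hu.2
    have hu2 : (1:ℝ) ≤ u + 2 := by nlinarith
    have hlogu : Real.log (u + 2) ≤ 3 * Real.log t := by
      calc Real.log (u + 2) ≤ Real.log (t^3) := by
            apply Real.log_le_log (by linarith)
            simp only [hbdef] at hub; nlinarith
        _ = 3 * Real.log t := by rw [Real.log_pow]; push_cast; ring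
    calc f u ≤ ((u - s)^2)⁻¹ * (3 * Real.log t) :=
          mul_le_mul (hFkey u hau) hlogu (Real.log_nonneg hu2) (by positivity)
      _ = 3 * Real.log t * ((u - s)^2)⁻¹ := by ring
  have hbd2 : ∀ u : ℝ, b ≤ u → f u ≤ 12 * (u * Real.sqrt u)⁻¹ := by
    intro u hub
    have hu0 : 0 < u := lt_of_lt_of_le hb0 hub
    have hus2 : u / 2 ≤ u - s := by nlinarith
    have hus : 0 < u - s := by nlinarith
    have h4 : ((u - s)^2)⁻¹ ≤ (u^2/4)⁻¹ := by gcongr <;> nlinarith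
    have hsu0 : 0 < Real.sqrt u := Real.sqrt_pos.2 hu0
    have hss : Real.sqrt u * Real.sqrt u = u := Real.mul_self_sqrt hu0.le
    have hbu : t^2 ≤ u := by rwa [hbdef] at hub
    have hbig : (8:ℝ) ≤ u := by linarith
    have hlogu : Real.log (u + 2) ≤ 3 * Real.sqrt u := by
      have h5 : Real.log (u + 2) = 2 * Real.log (Real.sqrt (u+2)) := by
        rw [Real.log_sqrt (by positivity)]; ring
      have h6 : Real.log (Real.sqrt (u+2)) ≤ Real.sqrt (u+2) := by
        have := Real.log_le_sub_one_of_pos (show 0 < Real.sqrt (u+2) by positivity)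
        linarith
      have h97 : Real.sqrt ((9:ℝ)/4) = 3/2 := by
        rw [show ((9:ℝ)/4) = (3/2)^2 by norm_num]
        exact Real.sqrt_sq (by norm_num)
      have h7 : Real.sqrt (u + 2) ≤ (3/2) * Real.sqrt u := by
        have h8 := Real.sqrt_le_sqrt (show u + 2 ≤ 9/4 * u by linarith)
        rwa [Real.sqrt_mul (by norm_num : (0:ℝ) ≤ 9/4) u, h97] at h8
      linarith
    have hu2 : (1:ℝ) ≤ u + 2 := by linarith
    calc f u ≤ (u^2/4)⁻¹ * (3 * Real.sqrt u) :=
          mul_le_mul ((hFkey u (lt_of_lt_of_le hab hub)).trans h4) hlogu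
            (Real.log_nonneg hu2) (by positivity)
      _ = 12 * (u * Real.sqrt u)⁻¹ := by
          field_simp
          nlinarith [hss]
  set g := fun u => 3 * Real.log t * ((u - s)^2)⁻¹ + 12 * (u * Real.sqrt u)⁻¹ with hgdef
  have hgint : IntegrableOn g (Set.Ioi a) := (hg1i.const_mul _).add hg2ia
  have hfint : IntegrableOn f (Set.Ioi a) := by
    refine Integrable.mono' hgint hfm.aestronglyMeasurable ?_
    filter_upwards [ae_restrict_mem measurableSet_Ioi] with u hu
    have hau : a < u := hu
    have hu0 : 0 < u := lt_trans ha0 hau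
    rw [Real.norm_eq_abs, abs_of_nonneg (hfnn u hau.le)]
    by_cases hub : u < b
    · have h1 := hbd1 u ⟨hau, hub⟩
      have h2 : (0:ℝ) ≤ 12 * (u * Real.sqrt u)⁻¹ := by positivity
      simp only [hgdef]; linarith
    · have h1 := hbd2 u (not_lt.1 hub)
      have h2 : (0:ℝ) ≤ 3 * Real.log t * ((u - s)^2)⁻¹ :=
        mul_nonneg (by linarith) (by positivity)
      simp only [hgdef]; linarith
  have hdisj : Disjoint (Set.Ioo a b) (Set.Ici b) := by
    rw [Set.disjoint_left]
    intro x hx hx'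
    exact absurd hx' (not_le.2 hx.2)
  have hsub1 : Set.Ioo a b ⊆ Set.Ioi a := Set.Ioo_subset_Ioi_self
  have hsub2 : Set.Ici b ⊆ Set.Ioi a := fun x hx => lt_of_lt_of_le hab hx
  have hsplit : ∫ u in Set.Ici a, f u = (∫ u in Set.Ioo a b, f u) + ∫ u in Set.Ici b, f u := by
    rw [integral_Ici_eq_integral_Ioi, ← Set.Ioo_union_Ici_eq_Ioi hab,
      setIntegral_union hdisj measurableSet_Ici (hfint.mono_set hsub1) (hfint.mono_set hsub2)]
  have hA : ∫ u in Set.Ioo a b, f u ≤ 3 * Real.log t * (2*r)⁻¹ := by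
    have step1 : ∫ u in Set.Ioo a b, f u
        ≤ ∫ u in Set.Ioo a b, 3 * Real.log t * ((u - s)^2)⁻¹ :=
      setIntegral_mono_on (hfint.mono_set hsub1)
        (IntegrableOn.mono_set (hg1i.const_mul _) hsub1) measurableSet_Ioo hbd1
    have step2 : ∫ u in Set.Ioo a b, 3 * Real.log t * ((u - s)^2)⁻¹
        ≤ ∫ u in Set.Ioi a, 3 * Real.log t * ((u - s)^2)⁻¹ := by
      apply setIntegral_mono_set (hg1i.const_mul _)
        (ae_of_all _ fun u => mul_nonneg (by linarith) (by positivity))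
        (HasSubset.Subset.eventuallyLE hsub1)
    have step3 : ∫ u in Set.Ioi a, 3 * Real.log t * ((u - s)^2)⁻¹
        = 3 * Real.log t * (2*r)⁻¹ := by
      rw [integral_const_mul, hg1v]
      congr 1
      simp only [hadef, hsdef]; ring
    linarith
  have hB : ∫ u in Set.Ici b, f u ≤ 24 * t⁻¹ := by
    rw [integral_Ici_eq_integral_Ioi]
    have step1 : ∫ u in Set.Ioi b, f u ≤ ∫ u in Set.Ioi b, 12 * (u * Real.sqrt u)⁻¹ :=
      setIntegral_mono_on (hfint.mono_set (fun x hx => lt_trans hab hx)) hg2i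
        measurableSet_Ioi (fun u hu => hbd2 u (le_of_lt hu))
    rw [hg2v, hsqb] at step1
    linarith
  calc ∫ u in Set.Ici a, f u = (∫ u in Set.Ioo a b, f u) + ∫ u in Set.Ici b, f u := hsplit
    _ ≤ 3 * Real.log t * (2*r)⁻¹ + 24 * t⁻¹ := add_le_add hA hB
    _ ≤ 3 * Real.log t / r := hfinal
end

section
/- Assume that for all large t and all 0 < h ≤ √t, N(t+h) − N(t) ≥ (h/(2π)) log(t/(2π)) − (1/2 + o(1)) (log t)/(log log t), where N is nondecreasing. Then if γ < γ′ are consecutive points of increase of N with γ large, γ′ − γ ≤ (π/(log log γ))(1 + o(1)). -/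
set_option maxHeartbeats 1000000


open Real

theorem stmt_8 (N : ℝ → ℝ) (hN : Monotone N)
    (hyp : ∀ ε : ℝ, 0 < ε → ∃ T₀ : ℝ, ∀ t : ℝ, T₀ ≤ t → ∀ h : ℝ, 0 < h → h ≤ Real.sqrt t →
      N (t + h) - N t ≥ h / (2 * π) * Real.log (t / (2 * π))
        - (1 / 2 + ε) * Real.log t / Real.log (Real.log t)) :
    ∀ ε : ℝ, 0 < ε → ∃ Γ₀ : ℝ, ∀ γ γ' : ℝ, Γ₀ ≤ γ → γ < γ' →
      (∀ x ∈ Set.Ioo γ γ', ∀ y ∈ Set.Ioo γ γ', N x = N y) →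
      γ' - γ ≤ (1 + ε) * π / Real.log (Real.log γ) := by
  intro ε hε
  obtain ⟨T₀, hT⟩ := hyp (ε/8) (by positivity)
  refine ⟨max (max T₀ (Real.exp (Real.exp 1)))
      (max (((1+ε/2)*π)^2) (2*π*Real.exp (((4+ε)*Real.log (2*π)+ε)/ε))), ?_⟩
  intro γ γ' hγ hlt hconst
  by_contra hcon
  push_neg at hcon
  have hπ := Real.pi_pos
  have hγT : T₀ ≤ γ := le_trans (le_trans (le_max_left _ _) (le_max_left _ _)) hγ
  have hγe : Real.exp (Real.exp 1) ≤ γ :=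
    le_trans (le_trans (le_max_right _ _) (le_max_left _ _)) hγ
  have hγs : ((1+ε/2)*π)^2 ≤ γ :=
    le_trans (le_trans (le_max_left _ _) (le_max_right _ _)) hγ
  have hγa : 2*π*Real.exp (((4+ε)*Real.log (2*π)+ε)/ε) ≤ γ :=
    le_trans (le_trans (le_max_right _ _) (le_max_right _ _)) hγ
  have hγ0 : 0 < γ := lt_of_lt_of_le (Real.exp_pos _) hγe
  set L := Real.log (Real.log γ) with hLdef
  have hlogγ : Real.exp 1 ≤ Real.log γ := by
    have := Real.log_le_log (Real.exp_pos _) hγe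
    simpa using this
  have hlogγ0 : 0 < Real.log γ := lt_of_lt_of_le (Real.exp_pos 1) hlogγ
  have hL1 : 1 ≤ L := by
    have := Real.log_le_log (Real.exp_pos 1) hlogγ
    simpa using this
  have hL0 : 0 < L := lt_of_lt_of_le one_pos hL1
  set δ := ε/2*π/L with hδdef
  set h := (1+ε/2)*π/L with hhdef
  have hδ0 : 0 < δ := div_pos (by positivity) hL0
  have hh0 : 0 < h := div_pos (by positivity) hL0
  set t := γ + δ with htdef
  have hγt : γ < t := by simp [htdef, hδ0]
  have ht0 : 0 < t := lt_trans hγ0 hγt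
  have hth : t + h = γ + (1+ε)*π/L := by
    rw [htdef, hδdef, hhdef]
    field_simp
    ring
  have hthγ' : t + h < γ' := by
    rw [hth]; linarith [hcon]
  have htmem : t ∈ Set.Ioo γ γ' := ⟨hγt, by linarith⟩
  have hthmem : t + h ∈ Set.Ioo γ γ' := ⟨by linarith, hthγ'⟩
  have hNeq : N (t + h) = N t := hconst (t+h) hthmem t htmem
  -- h ≤ sqrt t
  have hsq : h ≤ Real.sqrt t := by
    have h1 : h ≤ (1+ε/2)*π := div_le_self (by positivity) hL1
    have h2 : (1+ε/2)*π ≤ Real.sqrt γ := by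
      have := Real.sqrt_le_sqrt hγs
      rwa [Real.sqrt_sq (by positivity)] at this
    have h3 : Real.sqrt γ ≤ Real.sqrt t := Real.sqrt_le_sqrt (le_of_lt hγt)
    linarith
  have hγle_t : γ ≤ t := le_of_lt hγt
  have hT₀t : T₀ ≤ t := le_trans hγT hγle_t
  have hkey0 := hT t hT₀t h hh0 hsq
  rw [hNeq] at hkey0
  -- notation
  set A := Real.log (t/(2*π)) with hAdef
  set B := Real.log t with hBdef
  set M := Real.log (Real.log t) with hMdef
  set C := Real.log (2*π) with hCdef
  have hC0 : 0 < C := Real.log_pos (by nlinarith [Real.pi_gt_three])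
  have hBA : A = B - C := Real.log_div (ne_of_gt ht0) (by positivity)
  have hlogt0 : 0 < B := lt_of_lt_of_le hlogγ0 (Real.log_le_log hγ0 hγle_t)
  have hML : L ≤ M := Real.log_le_log hlogγ0 (Real.log_le_log hγ0 hγle_t)
  have hM0 : 0 < M := lt_of_lt_of_le hL0 hML
  -- ε*A ≥ (4+ε)*C + ε
  have hεA : (4+ε)*C + ε ≤ ε * A := by
    have hx : Real.exp (((4+ε)*C+ε)/ε) ≤ t/(2*π) := by
      rw [le_div_iff₀ (by positivity)]
      calc Real.exp (((4+ε)*C+ε)/ε) * (2*π) = 2*π*Real.exp (((4+ε)*C+ε)/ε) := by ring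
        _ ≤ γ := hγa
        _ ≤ t := hγle_t
    have hA' : ((4+ε)*C+ε)/ε ≤ A := by
      have := Real.log_le_log (Real.exp_pos _) hx
      rwa [Real.log_exp] at this
    calc (4+ε)*C+ε = (((4+ε)*C+ε)/ε) * ε := by field_simp
      _ ≤ A * ε := mul_le_mul_of_nonneg_right hA' (le_of_lt hε)
      _ = ε * A := by ring
  have hA0 : 0 < A := by nlinarith
  -- key inequality
  have hkey : h / (2*π) * A ≤ (1/2 + ε/8) * B / M := by linarith
  have hhdiv : h / (2*π) = (1+ε/2)/(2*L) := by
    rw [hhdef]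
    field_simp
  rw [hhdiv] at hkey
  have hkey2 : (1+ε/2)*A*M ≤ (1/2+ε/8)*B*(2*L) := by
    rw [div_mul_eq_mul_div, div_le_div_iff₀ (by positivity) hM0] at hkey
    linarith
  -- chain of contradictions
  have step1 : (1+ε/2)*A*L ≤ (1+ε/2)*A*M :=
    mul_le_mul_of_nonneg_left hML (by positivity)
  have hB' : B = A + C := by linarith
  have hkey3 : (1+ε/2)*A*M ≤ (1/2+ε/8)*(A+C)*(2*L) := by rw [hB'] at hkey2; exact hkey2
  have step2 : (ε/4)*(A*L) ≤ (1+ε/4)*(C*L) := by nlinarith [hkey3, step1]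
  have step3 : (ε/4)*A ≤ (1+ε/4)*C := by
    have h' : (ε/4)*A*L ≤ ((1+ε/4)*C)*L := by nlinarith [step2]
    exact (mul_le_mul_iff_of_pos_right hL0).mp h'
  nlinarith [step3, hεA, hε, hC0]
end
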